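/- arXiv:1602.00969 — 3 statements merged into one kernel-verified Lean document; each statement's English description precedes it below -/
import Mathlib

section
/- If (A₁,B₁,C₁) is a balanced set of m-sided dice and (A₂,B₂,C₂) is a balanced set of n-sided dice, then the concatenation A = A₁ ∪ (A₂+3m), B = B₁ ∪ (B₂+3m), C = C₁ ∪ (C₂+3m) is a balanced set of (m+n)-sided dice. -/
/-- Number of winning pairs: pairs (x,y) with x from X, y from Y, and x > y. -/
def W (X Y : Finset ℕ) : ℕ := ((X ×ˢ Y).filter (fun p => p.2 < p.1)).card

/-- A set of n-sided dice: a partition of [3n] into three n-element sets. -/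
def IsDice (n : ℕ) (A B C : Finset ℕ) : Prop :=
  A ∪ B ∪ C = Finset.Icc 1 (3 * n) ∧
  A.card = n ∧ B.card = n ∧ C.card = n ∧
  Disjoint A B ∧ Disjoint A C ∧ Disjoint B C

lemma W_eq_sum (X Y : Finset ℕ) :
    W X Y = ∑ x ∈ X, ∑ y ∈ Y, if y < x then 1 else 0 := by
  unfold W
  rw [Finset.card_filter, Finset.sum_product]

lemma shift_inj (m : ℕ) : Function.Injective (· + 3 * m) := fun a b h => by
  simpa using h

lemma shift_disj (m : ℕ) (X Y : Finset ℕ)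
    (hX : ∀ x ∈ X, x ≤ 3 * m) (hY : ∀ y ∈ Y, 1 ≤ y) :
    Disjoint X (Y.image (· + 3 * m)) := by
  rw [Finset.disjoint_right]
  intro a ha ha'
  simp only [Finset.mem_image] at ha
  obtain ⟨b, hb, rfl⟩ := ha
  have := hX _ ha'
  have := hY _ hb
  omega

lemma W_union (m : ℕ) (X₁ Y₁ X₂ Y₂ : Finset ℕ)
    (hX : ∀ x ∈ X₁, x ≤ 3 * m) (hY : ∀ y ∈ Y₁, y ≤ 3 * m)
    (hX2 : ∀ x ∈ X₂, 1 ≤ x) (hY2 : ∀ y ∈ Y₂, 1 ≤ y) :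
    W (X₁ ∪ X₂.image (· + 3 * m)) (Y₁ ∪ Y₂.image (· + 3 * m)) =
      W X₁ Y₁ + W X₂ Y₂ + X₂.card * Y₁.card := by
  have hdX := shift_disj m X₁ X₂ hX hX2
  have hdY := shift_disj m Y₁ Y₂ hY hY2
  rw [W_eq_sum, Finset.sum_union hdX]
  have t11 : ∑ x ∈ X₁, ∑ y ∈ (Y₁ ∪ Y₂.image (· + 3 * m)), (if y < x then 1 else 0)
      = W X₁ Y₁ := by
    rw [W_eq_sum]
    refine Finset.sum_congr rfl fun x hx => ?_
    rw [Finset.sum_union hdY]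
    have : ∑ y ∈ Y₂.image (· + 3 * m), (if y < x then 1 else 0) = 0 := by
      refine Finset.sum_eq_zero fun y hy => ?_
      simp only [Finset.mem_image] at hy
      obtain ⟨b, hb, rfl⟩ := hy
      have := hX _ hx
      have := hY2 _ hb
      have : ¬ (b + 3 * m < x) := by omega
      simp [this]
    omega
  have t2 : ∑ x ∈ X₂.image (· + 3 * m),
      ∑ y ∈ (Y₁ ∪ Y₂.image (· + 3 * m)), (if y < x then 1 else 0)
      = W X₂ Y₂ + X₂.card * Y₁.card := by
    rw [Finset.sum_image (fun a _ b _ h => shift_inj m h), W_eq_sum,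
      show X₂.card * Y₁.card = ∑ _x ∈ X₂, Y₁.card by rw [Finset.sum_const, smul_eq_mul],
      ← Finset.sum_add_distrib]
    refine Finset.sum_congr rfl fun x hx => ?_
    rw [Finset.sum_union hdY]
    have h1 : ∑ y ∈ Y₁, (if y < x + 3 * m then 1 else 0) = Y₁.card := by
      rw [Finset.card_eq_sum_ones]
      refine Finset.sum_congr rfl fun y hy => ?_
      have := hY _ hy
      have := hX2 _ hx
      have : y < x + 3 * m := by omega
      simp [this]
    have h2 : ∑ y ∈ Y₂.image (· + 3 * m), (if y < x + 3 * m then 1 else 0)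
        = ∑ y ∈ Y₂, (if y < x then 1 else 0) := by
      rw [Finset.sum_image (fun a _ b _ h => shift_inj m h)]
      refine Finset.sum_congr rfl fun y _ => ?_
      have : (y + 3 * m < x + 3 * m) ↔ (y < x) := by omega
      simp [this]
    rw [h1, h2]
    omega
  rw [t11, t2]
  ring

theorem stmt4 (m n : ℕ) (A₁ B₁ C₁ A₂ B₂ C₂ : Finset ℕ)
    (h₁ : IsDice m A₁ B₁ C₁) (h₂ : IsDice n A₂ B₂ C₂)
    (hbal₁ : W A₁ B₁ = W B₁ C₁ ∧ W B₁ C₁ = W C₁ A₁)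
    (hbal₂ : W A₂ B₂ = W B₂ C₂ ∧ W B₂ C₂ = W C₂ A₂) :
    IsDice (m + n) (A₁ ∪ A₂.image (· + 3 * m)) (B₁ ∪ B₂.image (· + 3 * m))
      (C₁ ∪ C₂.image (· + 3 * m)) ∧
    W (A₁ ∪ A₂.image (· + 3 * m)) (B₁ ∪ B₂.image (· + 3 * m)) =
      W (B₁ ∪ B₂.image (· + 3 * m)) (C₁ ∪ C₂.image (· + 3 * m)) ∧
    W (B₁ ∪ B₂.image (· + 3 * m)) (C₁ ∪ C₂.image (· + 3 * m)) =
      W (C₁ ∪ C₂.image (· + 3 * m)) (A₁ ∪ A₂.image (· + 3 * m)) := by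
  obtain ⟨hU₁, hA₁, hB₁, hC₁, hAB₁, hAC₁, hBC₁⟩ := h₁
  obtain ⟨hU₂, hA₂, hB₂, hC₂, hAB₂, hAC₂, hBC₂⟩ := h₂
  have mem₁ : ∀ x, (x ∈ A₁ ∨ x ∈ B₁ ∨ x ∈ C₁) ↔ (1 ≤ x ∧ x ≤ 3 * m) := by
    intro x
    have : x ∈ A₁ ∪ B₁ ∪ C₁ ↔ x ∈ Finset.Icc 1 (3 * m) := by rw [hU₁]
    simpa [Finset.mem_union, Finset.mem_Icc, or_assoc] using this
  have mem₂ : ∀ x, (x ∈ A₂ ∨ x ∈ B₂ ∨ x ∈ C₂) ↔ (1 ≤ x ∧ x ≤ 3 * n) := by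
    intro x
    have : x ∈ A₂ ∪ B₂ ∪ C₂ ↔ x ∈ Finset.Icc 1 (3 * n) := by rw [hU₂]
    simpa [Finset.mem_union, Finset.mem_Icc, or_assoc] using this
  have ubA₁ : ∀ x ∈ A₁, x ≤ 3 * m := fun x hx => ((mem₁ x).mp (Or.inl hx)).2
  have ubB₁ : ∀ x ∈ B₁, x ≤ 3 * m := fun x hx => ((mem₁ x).mp (Or.inr (Or.inl hx))).2
  have ubC₁ : ∀ x ∈ C₁, x ≤ 3 * m := fun x hx => ((mem₁ x).mp (Or.inr (Or.inr hx))).2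
  have lbA₂ : ∀ x ∈ A₂, 1 ≤ x := fun x hx => ((mem₂ x).mp (Or.inl hx)).1
  have lbB₂ : ∀ x ∈ B₂, 1 ≤ x := fun x hx => ((mem₂ x).mp (Or.inr (Or.inl hx))).1
  have lbC₂ : ∀ x ∈ C₂, 1 ≤ x := fun x hx => ((mem₂ x).mp (Or.inr (Or.inr hx))).1
  have inj : ∀ (S : Finset ℕ), (S.image (· + 3 * m)).card = S.card :=
    fun S => Finset.card_image_of_injective S (shift_inj m)
  have disj : ∀ (X₁ Y₁ X₂ Y₂ : Finset ℕ), (∀ x ∈ X₁, x ≤ 3 * m) →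
      (∀ y ∈ Y₁, y ≤ 3 * m) → (∀ x ∈ X₂, 1 ≤ x) → (∀ y ∈ Y₂, 1 ≤ y) →
      Disjoint X₁ Y₁ → Disjoint X₂ Y₂ →
      Disjoint (X₁ ∪ X₂.image (· + 3 * m)) (Y₁ ∪ Y₂.image (· + 3 * m)) := by
    intro X₁ Y₁ X₂ Y₂ hX hY hX2 hY2 h1 h2
    rw [Finset.disjoint_union_left, Finset.disjoint_union_right,
      Finset.disjoint_union_right]
    exact ⟨⟨h1, shift_disj m X₁ Y₂ hX hY2⟩,
      ⟨(shift_disj m Y₁ X₂ hY hX2).symm,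
        (Finset.disjoint_image (shift_inj m)).mpr h2⟩⟩
  refine ⟨⟨?_, ?_, ?_, ?_, ?_, ?_, ?_⟩, ?_, ?_⟩
  · ext x
    simp only [Finset.mem_union, Finset.mem_image, Finset.mem_Icc]
    constructor
    · rintro (((h | ⟨b, hb, rfl⟩) | (h | ⟨b, hb, rfl⟩)) | (h | ⟨b, hb, rfl⟩))
      · have := (mem₁ x).mp (Or.inl h); omega
      · have := (mem₂ b).mp (Or.inl hb); omega
      · have := (mem₁ x).mp (Or.inr (Or.inl h)); omega
      · have := (mem₂ b).mp (Or.inr (Or.inl hb)); omega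
      · have := (mem₁ x).mp (Or.inr (Or.inr h)); omega
      · have := (mem₂ b).mp (Or.inr (Or.inr hb)); omega
    · rintro ⟨h1, h2⟩
      by_cases hx : x ≤ 3 * m
      · rcases (mem₁ x).mpr ⟨h1, hx⟩ with h | h | h
        · exact Or.inl (Or.inl (Or.inl h))
        · exact Or.inl (Or.inr (Or.inl h))
        · exact Or.inr (Or.inl h)
      · have : 1 ≤ x - 3 * m ∧ x - 3 * m ≤ 3 * n := by omega
        rcases (mem₂ (x - 3 * m)).mpr this with h | h | h
        · exact Or.inl (Or.inl (Or.inr ⟨x - 3 * m, h, by omega⟩))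
        · exact Or.inl (Or.inr (Or.inr ⟨x - 3 * m, h, by omega⟩))
        · exact Or.inr (Or.inr ⟨x - 3 * m, h, by omega⟩)
  · rw [Finset.card_union_of_disjoint (shift_disj m A₁ A₂ ubA₁ lbA₂), inj, hA₁, hA₂]
  · rw [Finset.card_union_of_disjoint (shift_disj m B₁ B₂ ubB₁ lbB₂), inj, hB₁, hB₂]
  · rw [Finset.card_union_of_disjoint (shift_disj m C₁ C₂ ubC₁ lbC₂), inj, hC₁, hC₂]
  · exact disj A₁ B₁ A₂ B₂ ubA₁ ubB₁ lbA₂ lbB₂ hAB₁ hAB₂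
  · exact disj A₁ C₁ A₂ C₂ ubA₁ ubC₁ lbA₂ lbC₂ hAC₁ hAC₂
  · exact disj B₁ C₁ B₂ C₂ ubB₁ ubC₁ lbB₂ lbC₂ hBC₁ hBC₂
  · rw [W_union m A₁ B₁ A₂ B₂ ubA₁ ubB₁ lbA₂ lbB₂,
      W_union m B₁ C₁ B₂ C₂ ubB₁ ubC₁ lbB₂ lbC₂, hbal₁.1, hbal₂.1, hA₂, hB₂, hB₁, hC₁]
  · rw [W_union m B₁ C₁ B₂ C₂ ubB₁ ubC₁ lbB₂ lbC₂,
      W_union m C₁ A₁ C₂ A₂ ubC₁ ubA₁ lbC₂ lbA₂, hbal₁.2, hbal₂.2, hB₂, hC₂, hC₁, hA₁]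
end

section
/- If (A₁,B₁,C₁) is a non-transitive set of m-sided dice and (A₂,B₂,C₂) is a non-transitive set of n-sided dice, then their concatenation A = A₁ ∪ (A₂+3m), B = B₁ ∪ (B₂+3m), C = C₁ ∪ (C₂+3m) is a non-transitive set of (m+n)-sided dice. -/
lemma W_union_left (X X' Y : Finset ℕ) (h : Disjoint X X') :
    W (X ∪ X') Y = W X Y + W X' Y := by
  unfold W
  rw [Finset.union_product, Finset.filter_union, Finset.card_union_of_disjoint]
  apply Finset.disjoint_filter_filter
  rw [Finset.disjoint_left]
  intro p hp hp'
  rw [Finset.mem_product] at hp hp'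
  exact (Finset.disjoint_left.mp h hp.1) hp'.1

lemma W_union_right (X Y Y' : Finset ℕ) (h : Disjoint Y Y') :
    W X (Y ∪ Y') = W X Y + W X Y' := by
  unfold W
  rw [Finset.product_union, Finset.filter_union, Finset.card_union_of_disjoint]
  apply Finset.disjoint_filter_filter
  rw [Finset.disjoint_left]
  intro p hp hp'
  rw [Finset.mem_product] at hp hp'
  exact (Finset.disjoint_left.mp h hp.2) hp'.2

lemma W_shift (X Y : Finset ℕ) (c : ℕ) :
    W (X.image (· + c)) (Y.image (· + c)) = W X Y := by
  unfold W
  apply Finset.card_bij' (fun p _ => (p.1 - c, p.2 - c)) (fun p _ => (p.1 + c, p.2 + c))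
  · intro p hp
    simp only [Finset.mem_filter, Finset.mem_product, Finset.mem_image] at hp ⊢
    obtain ⟨⟨⟨x, hx, hx'⟩, ⟨y, hy, hy'⟩⟩, hlt⟩ := hp
    refine ⟨⟨?_, ?_⟩, ?_⟩ <;> [skip; skip; omega]
    · have : p.1 - c = x := by omega
      rwa [this]
    · have : p.2 - c = y := by omega
      rwa [this]
  · intro p hp
    simp only [Finset.mem_filter, Finset.mem_product, Finset.mem_image] at hp ⊢
    obtain ⟨⟨hx, hy⟩, hlt⟩ := hp
    exact ⟨⟨⟨p.1, hx, rfl⟩, ⟨p.2, hy, rfl⟩⟩, by omega⟩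
  · intro p hp
    simp only [Finset.mem_filter, Finset.mem_product, Finset.mem_image] at hp
    obtain ⟨⟨⟨x, _, hx'⟩, ⟨y, _, hy'⟩⟩, _⟩ := hp
    have h1 : c ≤ p.1 := by omega
    have h2 : c ≤ p.2 := by omega
    simp [Nat.sub_add_cancel h1, Nat.sub_add_cancel h2]
  · intro p _
    simp

lemma W_all (X Y : Finset ℕ) (h : ∀ x ∈ X, ∀ y ∈ Y, y < x) :
    W X Y = X.card * Y.card := by
  unfold W
  rw [Finset.filter_true_of_mem, Finset.card_product]
  intro p hp
  rw [Finset.mem_product] at hp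
  exact h p.1 hp.1 p.2 hp.2

lemma W_none (X Y : Finset ℕ) (h : ∀ x ∈ X, ∀ y ∈ Y, x ≤ y) :
    W X Y = 0 := by
  unfold W
  rw [Finset.filter_false_of_mem, Finset.card_empty]
  intro p hp
  rw [Finset.mem_product] at hp
  exact not_lt.mpr (h p.1 hp.1 p.2 hp.2)

lemma key (m : ℕ) (X₁ Y₁ X₂ Y₂ : Finset ℕ)
    (hX₁ : X₁ ⊆ Finset.Icc 1 (3 * m)) (hY₁ : Y₁ ⊆ Finset.Icc 1 (3 * m))
    (hX₂ : ∀ x ∈ X₂, 1 ≤ x) (hY₂ : ∀ y ∈ Y₂, 1 ≤ y) :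
    W (X₁ ∪ X₂.image (· + 3 * m)) (Y₁ ∪ Y₂.image (· + 3 * m))
      = W X₁ Y₁ + W X₂ Y₂ + X₂.card * Y₁.card := by
  have hdX : Disjoint X₁ (X₂.image (· + 3 * m)) := by
    rw [Finset.disjoint_left]
    intro a ha ha'
    have h1 := Finset.mem_Icc.mp (hX₁ ha)
    obtain ⟨x, hx, hx'⟩ := Finset.mem_image.mp ha'
    have := hX₂ x hx
    omega
  rw [W_union_left _ _ _ hdX]
  have hY₂' : ∀ y ∈ Y₂.image (· + 3 * m), 3 * m ≤ y := by
    intro y hy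
    obtain ⟨b, _, hb'⟩ := Finset.mem_image.mp hy
    omega
  have hdY : Disjoint Y₁ (Y₂.image (· + 3 * m)) := by
    rw [Finset.disjoint_left]
    intro a ha ha'
    have h1 := Finset.mem_Icc.mp (hY₁ ha)
    obtain ⟨y, hy, hy'⟩ := Finset.mem_image.mp ha'
    have := hY₂ y hy
    omega
  rw [W_union_right _ _ _ hdY, W_union_right _ _ _ hdY]
  have e1 : W X₁ (Y₂.image (· + 3 * m)) = 0 := by
    apply W_none
    intro x hx y hy
    have h1 := Finset.mem_Icc.mp (hX₁ hx)
    have := hY₂' y hy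
    omega
  have e2 : W (X₂.image (· + 3 * m)) Y₁ = X₂.card * Y₁.card := by
    rw [W_all]
    · rw [Finset.card_image_of_injective _ (add_left_injective _)]
    · intro x hx y hy
      obtain ⟨a, ha, ha'⟩ := Finset.mem_image.mp hx
      have := hX₂ a ha
      have h1 := Finset.mem_Icc.mp (hY₁ hy)
      omega
  have e3 : W (X₂.image (· + 3 * m)) (Y₂.image (· + 3 * m)) = W X₂ Y₂ := W_shift _ _ _
  rw [e1, e2, e3]
  ring

theorem stmt5 (m n : ℕ) (A₁ B₁ C₁ A₂ B₂ C₂ : Finset ℕ)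
    (h₁ : IsDice m A₁ B₁ C₁) (h₂ : IsDice n A₂ B₂ C₂)
    (hnt₁ : 2 * W A₁ B₁ > m ^ 2 ∧ 2 * W B₁ C₁ > m ^ 2 ∧ 2 * W C₁ A₁ > m ^ 2)
    (hnt₂ : 2 * W A₂ B₂ > n ^ 2 ∧ 2 * W B₂ C₂ > n ^ 2 ∧ 2 * W C₂ A₂ > n ^ 2) :
    IsDice (m + n) (A₁ ∪ A₂.image (· + 3 * m)) (B₁ ∪ B₂.image (· + 3 * m))
      (C₁ ∪ C₂.image (· + 3 * m)) ∧
    2 * W (A₁ ∪ A₂.image (· + 3 * m)) (B₁ ∪ B₂.image (· + 3 * m)) > (m + n) ^ 2 ∧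
    2 * W (B₁ ∪ B₂.image (· + 3 * m)) (C₁ ∪ C₂.image (· + 3 * m)) > (m + n) ^ 2 ∧
    2 * W (C₁ ∪ C₂.image (· + 3 * m)) (A₁ ∪ A₂.image (· + 3 * m)) > (m + n) ^ 2 := by
  obtain ⟨hu₁, hA₁c, hB₁c, hC₁c, hAB₁, hAC₁, hBC₁⟩ := h₁
  obtain ⟨hu₂, hA₂c, hB₂c, hC₂c, hAB₂, hAC₂, hBC₂⟩ := h₂
  have hA₁ : A₁ ⊆ Finset.Icc 1 (3 * m) := hu₁ ▸ fun x hx =>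
    Finset.mem_union_left _ (Finset.mem_union_left _ hx)
  have hB₁ : B₁ ⊆ Finset.Icc 1 (3 * m) := hu₁ ▸ fun x hx =>
    Finset.mem_union_left _ (Finset.mem_union_right _ hx)
  have hC₁ : C₁ ⊆ Finset.Icc 1 (3 * m) := hu₁ ▸ fun x hx => Finset.mem_union_right _ hx
  have hA₂ : A₂ ⊆ Finset.Icc 1 (3 * n) := hu₂ ▸ fun x hx =>
    Finset.mem_union_left _ (Finset.mem_union_left _ hx)
  have hB₂ : B₂ ⊆ Finset.Icc 1 (3 * n) := hu₂ ▸ fun x hx =>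
    Finset.mem_union_left _ (Finset.mem_union_right _ hx)
  have hC₂ : C₂ ⊆ Finset.Icc 1 (3 * n) := hu₂ ▸ fun x hx => Finset.mem_union_right _ hx
  have lb : ∀ X : Finset ℕ, X ⊆ Finset.Icc 1 (3 * n) → ∀ x ∈ X, 1 ≤ x := by
    intro X hX x hx
    exact (Finset.mem_Icc.mp (hX hx)).1
  have hinj : Function.Injective (· + 3 * m) := add_left_injective _
  -- disjointness of an Icc-1-(3m) set with any shifted set
  have hdisj : ∀ X Y : Finset ℕ, X ⊆ Finset.Icc 1 (3 * m) → (∀ y ∈ Y, 1 ≤ y) →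
      Disjoint X (Y.image (· + 3 * m)) := by
    intro X Y hX hY
    rw [Finset.disjoint_left]
    intro a ha ha'
    have h1 := Finset.mem_Icc.mp (hX ha)
    obtain ⟨y, hy, hy'⟩ := Finset.mem_image.mp ha'
    have := hY y hy
    omega
  have hdisj2 : ∀ X Y : Finset ℕ, Disjoint X Y →
      Disjoint (X.image (· + 3 * m)) (Y.image (· + 3 * m)) := by
    intro X Y h
    exact Finset.disjoint_image hinj |>.mpr h
  have hdU : ∀ X₁' Y₁' X₂' Y₂' : Finset ℕ, X₁' ⊆ Finset.Icc 1 (3 * m) →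
      Y₁' ⊆ Finset.Icc 1 (3 * m) → (∀ x ∈ X₂', 1 ≤ x) → (∀ y ∈ Y₂', 1 ≤ y) →
      Disjoint X₁' Y₁' → Disjoint X₂' Y₂' →
      Disjoint (X₁' ∪ X₂'.image (· + 3 * m)) (Y₁' ∪ Y₂'.image (· + 3 * m)) := by
    intro X₁' Y₁' X₂' Y₂' hX1 hY1 hX2 hY2 h1 h2
    rw [Finset.disjoint_union_left, Finset.disjoint_union_right,
      Finset.disjoint_union_right]
    exact ⟨⟨h1, hdisj _ _ hX1 hY2⟩, ⟨(hdisj _ _ hY1 hX2).symm, hdisj2 _ _ h2⟩⟩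
  have cardU : ∀ X Y : Finset ℕ, X ⊆ Finset.Icc 1 (3 * m) → (∀ y ∈ Y, 1 ≤ y) →
      (X ∪ Y.image (· + 3 * m)).card = X.card + Y.card := by
    intro X Y hX hY
    rw [Finset.card_union_of_disjoint (hdisj _ _ hX hY),
      Finset.card_image_of_injective _ hinj]
  refine ⟨⟨?_, ?_, ?_, ?_, ?_, ?_, ?_⟩, ?_, ?_, ?_⟩
  · have himg : (Finset.Icc 1 (3 * n)).image (· + 3 * m)
        = Finset.Icc (1 + 3 * m) (3 * n + 3 * m) := by
      ext x
      simp only [Finset.mem_image, Finset.mem_Icc]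
      constructor
      · rintro ⟨a, ha, rfl⟩; omega
      · intro hx; exact ⟨x - 3 * m, by omega, by omega⟩
    have : A₁ ∪ A₂.image (· + 3 * m) ∪ (B₁ ∪ B₂.image (· + 3 * m)) ∪
        (C₁ ∪ C₂.image (· + 3 * m)) =
        (A₁ ∪ B₁ ∪ C₁) ∪ ((A₂ ∪ B₂ ∪ C₂).image (· + 3 * m)) := by
      rw [Finset.image_union, Finset.image_union]
      ext x
      simp only [Finset.mem_union]
      tauto
    rw [this, hu₁, hu₂, himg]
    ext x
    simp only [Finset.mem_union, Finset.mem_Icc]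
    omega
  · rw [cardU _ _ hA₁ (lb _ hA₂), hA₁c, hA₂c]
  · rw [cardU _ _ hB₁ (lb _ hB₂), hB₁c, hB₂c]
  · rw [cardU _ _ hC₁ (lb _ hC₂), hC₁c, hC₂c]
  · exact hdU _ _ _ _ hA₁ hB₁ (lb _ hA₂) (lb _ hB₂) hAB₁ hAB₂
  · exact hdU _ _ _ _ hA₁ hC₁ (lb _ hA₂) (lb _ hC₂) hAC₁ hAC₂
  · exact hdU _ _ _ _ hB₁ hC₁ (lb _ hB₂) (lb _ hC₂) hBC₁ hBC₂
  · rw [key m A₁ B₁ A₂ B₂ hA₁ hB₁ (lb _ hA₂) (lb _ hB₂), hA₂c, hB₁c]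
    have e : (m + n) ^ 2 = m ^ 2 + n ^ 2 + 2 * (n * m) := by ring
    rw [e]; linarith [hnt₁.1, hnt₂.1]
  · rw [key m B₁ C₁ B₂ C₂ hB₁ hC₁ (lb _ hB₂) (lb _ hC₂), hB₂c, hC₁c]
    have e : (m + n) ^ 2 = m ^ 2 + n ^ 2 + 2 * (n * m) := by ring
    rw [e]; linarith [hnt₁.2.1, hnt₂.2.1]
  · rw [key m C₁ A₁ C₂ A₂ hC₁ hA₁ (lb _ hC₂) (lb _ hA₂), hC₂c, hA₁c]
    have e : (m + n) ^ 2 = m ^ 2 + n ^ 2 + 2 * (n * m) := by ring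
    rw [e]; linarith [hnt₁.2.2, hnt₂.2.2]
end

section
/- For every integer n ≥ 3, there exists a partition of [4n] into four n-element sets A, B, C, D with W(A,B) = W(B,C) = W(C,D) = W(D,A) > n²/2, i.e., a balanced non-transitive set of four n-sided dice exists. -/
/-- A set of four n-sided dice: a partition of [4n] into four n-element sets. -/
def IsDice4 (n : ℕ) (A B C D : Finset ℕ) : Prop :=
  A ∪ B ∪ C ∪ D = Finset.Icc 1 (4 * n) ∧
  A.card = n ∧ B.card = n ∧ C.card = n ∧ D.card = n ∧
  Disjoint A B ∧ Disjoint A C ∧ Disjoint A D ∧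
  Disjoint B C ∧ Disjoint B D ∧ Disjoint C D

open Finset

lemma Wshift (X Y : Finset ℕ) (k : ℕ) :
    W (X.map (addRightEmbedding k)) (Y.map (addRightEmbedding k)) = W X Y := by
  unfold W
  apply Finset.card_bij' (fun p _ => (p.1 - k, p.2 - k)) (fun p _ => (p.1 + k, p.2 + k))
  · intro p hp
    simp only [mem_filter, mem_product, mem_map, addRightEmbedding_apply] at hp ⊢
    obtain ⟨⟨⟨a, ha, h1⟩, ⟨b, hb, h2⟩⟩, hlt⟩ := hp
    obtain ⟨p1, p2⟩ := p
    simp_all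
    constructor
    · constructor
      · have : p1 - k = a := by omega
        rw [this]; exact ha
      · have : p2 - k = b := by omega
        rw [this]; exact hb
    · omega
  · intro p hp
    simp only [mem_filter, mem_product, mem_map, addRightEmbedding_apply] at hp ⊢
    obtain ⟨⟨ha, hb⟩, hlt⟩ := hp
    exact ⟨⟨⟨_, ha, rfl⟩, ⟨_, hb, rfl⟩⟩, by omega⟩
  · intro p hp
    simp only [mem_filter, mem_product, mem_map, addRightEmbedding_apply] at hp
    obtain ⟨⟨⟨a, _, h1⟩, ⟨b, _, h2⟩⟩, _⟩ := hp
    obtain ⟨p1, p2⟩ := p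
    simp_all
    omega
  · intro p hp
    simp

lemma Wunion (A B S S' : Finset ℕ)
    (hSB : ∀ s ∈ S, ∀ b ∈ B, b < s)
    (hAS : ∀ a ∈ A, ∀ s ∈ S', ¬ s < a)
    (hAS' : Disjoint A S) (hBS' : Disjoint B S') :
    W (A ∪ S) (B ∪ S') = W A B + W S S' + S.card * B.card := by
  unfold W
  rw [Finset.union_product, Finset.product_union, Finset.product_union,
    filter_union, filter_union, filter_union]
  have h1 : (A ×ˢ S').filter (fun p => p.2 < p.1) = ∅ := by
    apply filter_false_of_mem
    intro p hp
    rw [mem_product] at hp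
    exact hAS p.1 hp.1 p.2 hp.2
  have h2 : (S ×ˢ B).filter (fun p => p.2 < p.1) = S ×ˢ B := by
    apply filter_true_of_mem
    intro p hp
    rw [mem_product] at hp
    exact hSB p.1 hp.1 p.2 hp.2
  rw [h1, h2, union_empty]
  rw [card_union_of_disjoint, card_union_of_disjoint, card_product]
  · ring
  · rw [Finset.disjoint_left]
    intro p hp hp'
    rw [mem_product] at hp
    rw [mem_filter, mem_product] at hp'
    exact (Finset.disjoint_left.mp hBS') hp.2 hp'.1.2
  · rw [Finset.disjoint_left]
    intro p hp hp'
    rw [mem_filter, mem_product] at hp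
    rw [mem_union] at hp'
    have : p.1 ∈ S := by
      rcases hp' with h | h
      · exact (mem_product.mp h).1
      · exact (mem_product.mp (mem_filter.mp h).1).1
    exact (Finset.disjoint_left.mp hAS') hp.1.1 this

theorem stmt15 (n : ℕ) (hn : 3 ≤ n) :
    ∃ A B C D : Finset ℕ, IsDice4 n A B C D ∧
      W A B = W B C ∧ W B C = W C D ∧ W C D = W D A ∧
      2 * W A B > n ^ 2 := by
  induction n using Nat.strong_induction_on with
  | _ n ih =>
  rcases Nat.lt_or_ge n 6 with h6 | h6
  · interval_cases n
    · exact ⟨{4,6,10}, {3,5,11}, {2,8,9}, {1,7,12},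
        ⟨by decide, by decide, by decide, by decide, by decide, by decide, by decide,
         by decide, by decide, by decide, by decide⟩, by decide, by decide, by decide, by decide⟩
    · exact ⟨{4,7,10,13}, {3,6,9,16}, {2,5,12,15}, {1,8,11,14},
        ⟨by decide, by decide, by decide, by decide, by decide, by decide, by decide,
         by decide, by decide, by decide, by decide⟩, by decide, by decide, by decide, by decide⟩
    · exact ⟨{4,6,10,15,18}, {3,5,11,14,19}, {2,8,9,16,17}, {1,7,12,13,20},
        ⟨by decide, by decide, by decide, by decide, by decide, by decide, by decide,
         by decide, by decide, by decide, by decide⟩, by decide, by decide, by decide, by decide⟩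
  · -- inductive step: n = m + 3, m ≥ 3
    obtain ⟨m, rfl⟩ : ∃ m, n = m + 3 := ⟨n - 3, by omega⟩
    obtain ⟨A, B, C, D, ⟨hU, hcA, hcB, hcC, hcD, dAB, dAC, dAD, dBC, dBD, dCD⟩,
      e1, e2, e3, hgt⟩ := ih m (by omega) (by omega)
    set e := addRightEmbedding (4 * m) with he
    set TA : Finset ℕ := {4,6,10}
    set TB : Finset ℕ := {3,5,11}
    set TC : Finset ℕ := {2,8,9}
    set TD : Finset ℕ := {1,7,12}
    -- bounds on the old dice
    have hmem : ∀ x, x ∈ A ∪ B ∪ C ∪ D ↔ 1 ≤ x ∧ x ≤ 4 * m := by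
      intro x; rw [hU, mem_Icc]
    have hA : ∀ x ∈ A, x ≤ 4 * m := fun x hx =>
      ((hmem x).mp (by simp [mem_union, hx])).2
    have hB : ∀ x ∈ B, x ≤ 4 * m := fun x hx =>
      ((hmem x).mp (by simp [mem_union, hx])).2
    have hC : ∀ x ∈ C, x ≤ 4 * m := fun x hx =>
      ((hmem x).mp (by simp [mem_union, hx])).2
    have hD : ∀ x ∈ D, x ≤ 4 * m := fun x hx =>
      ((hmem x).mp (by simp [mem_union, hx])).2
    -- bounds on shifted blocks
    have hSbd : ∀ (T : Finset ℕ), (∀ t ∈ T, 1 ≤ t ∧ t ≤ 12) →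
        ∀ x ∈ T.map e, 4 * m + 1 ≤ x ∧ x ≤ 4 * m + 12 := by
      intro T hT x hx
      rw [mem_map] at hx
      obtain ⟨t, ht, rfl⟩ := hx
      have := hT t ht
      simp [he, addRightEmbedding_apply]
      omega
    have hTA : ∀ t ∈ TA, 1 ≤ t ∧ t ≤ 12 := by decide
    have hTB : ∀ t ∈ TB, 1 ≤ t ∧ t ≤ 12 := by decide
    have hTC : ∀ t ∈ TC, 1 ≤ t ∧ t ≤ 12 := by decide
    have hTD : ∀ t ∈ TD, 1 ≤ t ∧ t ≤ 12 := by decide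
    -- generic disjointness of old die and shifted block
    have keyDlow : ∀ (X T : Finset ℕ), (∀ x ∈ X, x ≤ 4 * m) →
        (∀ t ∈ T, 1 ≤ t ∧ t ≤ 12) → Disjoint X (T.map e) := by
      intro X T hX hT
      rw [Finset.disjoint_left]
      intro x hx hx'
      have := hSbd T hT x hx'
      have := hX x hx
      omega
    have keyD : ∀ (X Y TX TY : Finset ℕ), (∀ x ∈ X, x ≤ 4 * m) →
        (∀ y ∈ Y, y ≤ 4 * m) → (∀ t ∈ TX, 1 ≤ t ∧ t ≤ 12) →
        (∀ t ∈ TY, 1 ≤ t ∧ t ≤ 12) → Disjoint X Y → Disjoint TX TY →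
        Disjoint (X ∪ TX.map e) (Y ∪ TY.map e) := by
      intro X Y TX TY hX hY hTX hTY dXY dTXY
      rw [Finset.disjoint_union_left, Finset.disjoint_union_right,
        Finset.disjoint_union_right]
      exact ⟨⟨dXY, keyDlow X TY hX hTY⟩,
        ⟨(keyDlow Y TX hY hTX).symm, (Finset.disjoint_map e).mpr dTXY⟩⟩
    -- generic W computation
    have keyW : ∀ (X Y TX TY : Finset ℕ), (∀ x ∈ X, x ≤ 4 * m) →
        (∀ y ∈ Y, y ≤ 4 * m) → (∀ t ∈ TX, 1 ≤ t ∧ t ≤ 12) →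
        (∀ t ∈ TY, 1 ≤ t ∧ t ≤ 12) → Y.card = m →
        W (X ∪ TX.map e) (Y ∪ TY.map e) = W X Y + W TX TY + TX.card * m := by
      intro X Y TX TY hX hY hTX hTY hYc
      rw [Wunion, Wshift, card_map, hYc]
      · intro s hs b hb
        have := hSbd TX hTX s hs
        have := hY b hb
        omega
      · intro a ha s hs
        have := hSbd TY hTY s hs
        have := hX a ha
        omega
      · exact keyDlow X TX hX hTX
      · exact keyDlow Y TY hY hTY
    refine ⟨A ∪ TA.map e, B ∪ TB.map e, C ∪ TC.map e, D ∪ TD.map e,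
      ⟨?_, ?_, ?_, ?_, ?_, ?_, ?_, ?_, ?_, ?_, ?_⟩, ?_, ?_, ?_, ?_⟩
    · -- union
      have hre : A ∪ TA.map e ∪ (B ∪ TB.map e) ∪ (C ∪ TC.map e) ∪ (D ∪ TD.map e)
          = (A ∪ B ∪ C ∪ D) ∪ (TA ∪ TB ∪ TC ∪ TD).map e := by
        rw [Finset.map_union, Finset.map_union, Finset.map_union]
        ext x
        simp only [mem_union]
        tauto
      rw [hre, hU]
      have : (TA ∪ TB ∪ TC ∪ TD) = Finset.Icc 1 12 := by decide
      rw [this, he, Finset.map_add_right_Icc]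
      ext x
      simp only [mem_union, mem_Icc]
      omega
    · rw [card_union_of_disjoint (keyDlow A TA hA hTA), card_map, hcA,
        show TA.card = 3 from by decide]
    · rw [card_union_of_disjoint (keyDlow B TB hB hTB), card_map, hcB,
        show TB.card = 3 from by decide]
    · rw [card_union_of_disjoint (keyDlow C TC hC hTC), card_map, hcC,
        show TC.card = 3 from by decide]
    · rw [card_union_of_disjoint (keyDlow D TD hD hTD), card_map, hcD,
        show TD.card = 3 from by decide]
    · exact keyD A B TA TB hA hB hTA hTB dAB (by decide)
    · exact keyD A C TA TC hA hC hTA hTC dAC (by decide)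
    · exact keyD A D TA TD hA hD hTA hTD dAD (by decide)
    · exact keyD B C TB TC hB hC hTB hTC dBC (by decide)
    · exact keyD B D TB TD hB hD hTB hTD dBD (by decide)
    · exact keyD C D TC TD hC hD hTC hTD dCD (by decide)
    · rw [keyW A B TA TB hA hB hTA hTB hcB, keyW B C TB TC hB hC hTB hTC hcC, e1]
      norm_num [show W TA TB = 5 by decide, show W TB TC = 5 by decide,
        show TA.card = 3 by decide, show TB.card = 3 by decide]
    · rw [keyW B C TB TC hB hC hTB hTC hcC, keyW C D TC TD hC hD hTC hTD hcD, e2]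
      norm_num [show W TB TC = 5 by decide, show W TC TD = 5 by decide,
        show TB.card = 3 by decide, show TC.card = 3 by decide]
    · rw [keyW C D TC TD hC hD hTC hTD hcD, keyW D A TD TA hD hA hTD hTA hcA, e3]
      norm_num [show W TC TD = 5 by decide, show W TD TA = 5 by decide,
        show TC.card = 3 by decide, show TD.card = 3 by decide]
    · rw [keyW A B TA TB hA hB hTA hTB hcB]
      have h5 : W TA TB = 5 := by decide
      have h3 : TA.card = 3 := by decide
      rw [h5, h3]
      nlinarith [hgt]
end
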